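/- Let G = Ḡ ⋉ U be a semidirect product of groups acting on a group Π (with the U-action extending to G). Restriction of cocycles induces a bijection between ker(Z¹(G;Π) → Z¹(Ḡ;Π)) (cocycles trivial on Ḡ) and the set Z¹(U;Π)^Ḡ of Ḡ-equivariant cocycles U → Π, where Ḡ acts on Z¹(U;Π) by (g·c)(u) = g(c(g⁻¹ u g)). -/
import Mathlib


open SemidirectProduct

theorem stmt13 {Gb U P : Type*} [Group Gb] [Group U] [Group P]
    (ψ : Gb →* MulAut U) (α : (U ⋊[ψ] Gb) →* MulAut P) :
    let Cond1 : ((U ⋊[ψ] Gb) → P) → Prop := fun c =>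
      (∀ g₁ g₂ : U ⋊[ψ] Gb, c (g₁ * g₂) = c g₁ * α g₁ (c g₂)) ∧
      ∀ g : Gb, c (inr g) = 1
    let Cond2 : (U → P) → Prop := fun d =>
      (∀ u₁ u₂ : U, d (u₁ * u₂) = d u₁ * α (inl u₁) (d u₂)) ∧
      ∀ (g : Gb) (u : U), d (ψ g u) = α (inr g) (d u)
    (∀ c, Cond1 c → Cond2 (fun u => c (inl u))) ∧
    (∀ c c', Cond1 c → Cond1 c' → (∀ u : U, c (inl u) = c' (inl u)) → c = c') ∧
    (∀ d, Cond2 d → ∃ c, Cond1 c ∧ ∀ u : U, c (inl u) = d u) := by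
  intro Cond1 Cond2
  have key : ∀ c, Cond1 c → ∀ u g, c ⟨u, g⟩ = c (inl u) := by
    intro c ⟨hc, hc1⟩ u g
    rw [mk_eq_inl_mul_inr, hc, hc1, map_one, mul_one]
  refine ⟨?_, ?_, ?_⟩
  · rintro c hc
    obtain ⟨hcc, hc1⟩ := hc
    refine ⟨fun u₁ u₂ => ?_, fun g u => ?_⟩
    · show c (inl (u₁ * u₂)) = _
      rw [map_mul, hcc]
    have h1 : (inr g : U ⋊[ψ] Gb) * inl u = inl (ψ g u) * inr g := by
      ext <;> simp
    have h2 := hcc (inr g) (inl u)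
    rw [h1, hcc] at h2
    simp only [hc1, one_mul, map_one, mul_one] at h2
    exact h2
  · intro c c' hc hc' h
    funext x
    rw [← inl_left_mul_inr_right x]
    have := key c hc x.left x.right
    have := key c' hc' x.left x.right
    simp only [mk_eq_inl_mul_inr] at *
    rw [‹c _ = _›, ‹c' _ = _›, h]
  · rintro d ⟨hd, hd2⟩
    have hd1 : d 1 = 1 := by
      have := hd 1 1
      simp only [mul_one, map_one, MulAut.one_apply] at this
      exact (left_eq_mul.mp this)
    refine ⟨fun x => d x.left, ⟨?_, fun g => hd1⟩, fun u => rfl⟩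
    rintro ⟨u₁, g₁⟩ ⟨u₂, g₂⟩
    show d (u₁ * ψ g₁ u₂) = d u₁ * α ⟨u₁, g₁⟩ (d u₂)
    rw [hd, hd2, mk_eq_inl_mul_inr, map_mul]
    rfl
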